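/- (Exact mask-disagreement identity.) Let n ≥ 1, d ≥ 1, K ∈ {1,…,d}, p = K/d, q = 1 − p. Fix vectors y_1,…,y_n, z_1,…,z_n ∈ ℝ^d, set v_i = z_i − y_i, and let ȳ, z̄, v̄ denote the averages (1/n)∑_i y_i, (1/n)∑_i z_i, (1/n)∑_i v_i. Let S be a random subset of {1,…,d} uniform over subsets of cardinality K, and define x_i' = z_i + Proj_S(ȳ − y_i). Then E[∑_{i=1}^n ‖x_i' − x̄'‖²] = q ∑_{i=1}^n ‖z_i − z̄‖² + p ∑_{i=1}^n ‖v_i − v̄‖², where x̄' = (1/n)∑_i x_i'. -/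

import Mathlib

open MeasureTheory
open scoped ENNReal

/-- Coordinate projection onto the coordinates in `S`: keeps the coordinates in `S`
and zeroes the others. -/
noncomputable def sparseProj {d : ℕ} (S : Finset (Fin d))
    (v : EuclideanSpace ℝ (Fin d)) : EuclideanSpace ℝ (Fin d) :=
  ∑ j ∈ S, EuclideanSpace.single j (v j)

lemma sparseProj_apply {d : ℕ} (S : Finset (Fin d)) (v : EuclideanSpace ℝ (Fin d)) (j : Fin d) :
    sparseProj S v j = if j ∈ S then v j else 0 := by
  rw [sparseProj, WithLp.ofLp_sum, Finset.sum_apply]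
  simp [EuclideanSpace.single_apply]

lemma euclid_norm_sq {d : ℕ} (w : EuclideanSpace ℝ (Fin d)) : ‖w‖^2 = ∑ j, (w j)^2 := by
  rw [EuclideanSpace.norm_eq, Real.sq_sqrt (by positivity)]
  simp [sq_abs]

lemma count_mem_powersetCard {d K : ℕ} (hK : 1 ≤ K) (j : Fin d) :
    ((Finset.powersetCard K (Finset.univ : Finset (Fin d))).filter (fun s => j ∈ s)).card
      = (d-1).choose (K-1) := by
  classical
  rw [Finset.card_bij (fun s _ => Finset.erase s j)
    (t := Finset.powersetCard (K-1) (Finset.univ.erase j))]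
  · rw [Finset.card_powersetCard, Finset.card_erase_of_mem (Finset.mem_univ j),
      Finset.card_univ, Fintype.card_fin]
  · rintro s hs
    simp only [Finset.mem_filter, Finset.mem_powersetCard] at hs
    exact Finset.mem_powersetCard.2 ⟨Finset.erase_subset_erase j hs.1.1,
      by rw [Finset.card_erase_of_mem hs.2, hs.1.2]⟩
  · rintro s hs t ht h
    simp only [Finset.mem_filter] at hs ht
    rw [← Finset.insert_erase hs.2, ← Finset.insert_erase ht.2, h]
  · rintro t ht
    rw [Finset.mem_powersetCard] at ht
    have hj : j ∉ t := fun h => (Finset.notMem_erase j Finset.univ) (ht.1 h)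
    refine ⟨insert j t, ?_, by simp [hj]⟩
    simp only [Finset.mem_filter, Finset.mem_powersetCard, Finset.mem_insert_self, and_true]
    exact ⟨Finset.subset_univ _, by rw [Finset.card_insert_of_notMem hj, ht.2]; omega⟩

lemma integral_comp_finset {Ω : Type*} [MeasurableSpace Ω] (μ : Measure Ω) [IsProbabilityMeasure μ]
    {d : ℕ} (S : Ω → Finset (Fin d)) (hSmeas : @Measurable Ω (Finset (Fin d)) _ ⊤ S)
    (g : Finset (Fin d) → ℝ) :
    ∫ ω, g (S ω) ∂μ = ∑ s : Finset (Fin d), (μ (S ⁻¹' {s})).toReal * g s := by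
  classical
  have hM : ∀ s : Finset (Fin d), MeasurableSet (S ⁻¹' {s}) := fun s =>
    hSmeas (by trivial)
  have h1 : ∀ ω, g (S ω) = ∑ s : Finset (Fin d), (S ⁻¹' {s}).indicator (fun _ => g s) ω := by
    intro ω
    rw [Finset.sum_eq_single (S ω)]
    · simp [Set.indicator_of_mem, Set.mem_preimage]
    · intro s _ hs
      exact Set.indicator_of_notMem (by simp [Set.mem_preimage]; exact fun h => hs h.symm) _
    · simp
  simp_rw [h1]
  rw [integral_finset_sum _ (fun s _ => (integrable_const (g s)).indicator (hM s))]
  refine Finset.sum_congr rfl fun s _ => ?_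
  rw [integral_indicator_const _ (hM s), smul_eq_mul]
  rfl

lemma measure_zero_of_card_ne {Ω : Type*} [MeasurableSpace Ω] (μ : Measure Ω)
    [IsProbabilityMeasure μ] {d K : ℕ} (hKd : K ≤ d)
    (S : Ω → Finset (Fin d)) (hSmeas : @Measurable Ω (Finset (Fin d)) _ ⊤ S)
    (hSunif : ∀ s : Finset (Fin d), s.card = K →
      μ (S ⁻¹' {s}) = ((d.choose K : ℝ≥0∞))⁻¹)
    (t : Finset (Fin d)) (ht : t.card ≠ K) : μ (S ⁻¹' {t}) = 0 := by
  classical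
  have hM : ∀ s : Finset (Fin d), MeasurableSet (S ⁻¹' {s}) := fun s => hSmeas (by trivial)
  set P := Finset.powersetCard K (Finset.univ : Finset (Fin d)) with hP
  have hdisj : (P : Set (Finset (Fin d))).PairwiseDisjoint (fun s => S ⁻¹' {s}) := by
    intro a _ b _ hab
    refine Set.disjoint_left.2 fun ω ha hb => hab ?_
    simp only [Set.mem_preimage, Set.mem_singleton_iff] at ha hb
    rw [← ha, ← hb]
  have hU : μ (⋃ s ∈ P, S ⁻¹' {s}) = 1 := by
    rw [measure_biUnion_finset hdisj (fun s _ => hM s)]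
    have hcard : ∀ s ∈ P, μ (S ⁻¹' {s}) = ((d.choose K : ℝ≥0∞))⁻¹ := fun s hs =>
      hSunif s (Finset.mem_powersetCard.1 hs).2
    rw [Finset.sum_congr rfl hcard, Finset.sum_const, hP, Finset.card_powersetCard,
      Finset.card_univ, Fintype.card_fin, nsmul_eq_mul]
    refine ENNReal.mul_inv_cancel ?_ (ENNReal.natCast_ne_top _)
    exact_mod_cast Nat.choose_pos hKd |>.ne'
  have hdisj2 : Disjoint (S ⁻¹' {t}) (⋃ s ∈ P, S ⁻¹' {s}) := by
    refine Set.disjoint_left.2 fun ω hω hω2 => ?_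
    simp only [Set.mem_iUnion, Set.mem_preimage, Set.mem_singleton_iff] at hω hω2
    obtain ⟨s, hs, h2⟩ := hω2
    exact ht (by rw [hω] at h2; rw [h2] at hω ⊢; exact (Finset.mem_powersetCard.1 hs).2)
  have hle : μ (S ⁻¹' {t}) + 1 ≤ 1 := by
    rw [← hU, ← measure_union hdisj2 (Finset.measurableSet_biUnion _ (fun s _ => hM s))]
    rw [hU]
    exact measure_mono (Set.subset_univ _) |>.trans_eq (measure_univ)
  have : μ (S ⁻¹' {t}) + 1 ≤ 0 + 1 := by rwa [zero_add]
  simpa using (ENNReal.add_le_add_iff_right ENNReal.one_ne_top).1 this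

/-- **Exact mask-disagreement identity.**
For the delay-corrected merge `x_i' = z_i + Proj_S(ȳ − y_i)` with a shared mask `S`
uniform over `K`-subsets of `{1,…,d}`, and `v_i = z_i − y_i`,
`E[∑_i ‖x_i' − x̄'‖²] = q ∑_i ‖z_i − z̄‖² + p ∑_i ‖v_i − v̄‖²`,
where `p = K/d` and `q = 1 − p`. -/
theorem exact_mask_disagreement_identity
    {Ω : Type*} [MeasurableSpace Ω] (μ : Measure Ω) [IsProbabilityMeasure μ]
    (n d K : ℕ) (hn : 1 ≤ n) (hd : 1 ≤ d) (hK1 : 1 ≤ K) (hKd : K ≤ d)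
    (p q : ℝ) (hp : p = (K : ℝ) / d) (hq : q = 1 - p)
    (y z v : Fin n → EuclideanSpace ℝ (Fin d)) (hv : ∀ i, v i = z i - y i)
    (S : Ω → Finset (Fin d))
    (hSmeas : @Measurable Ω (Finset (Fin d)) _ ⊤ S)
    (hSunif : ∀ s : Finset (Fin d), s.card = K →
      μ (S ⁻¹' {s}) = ((d.choose K : ℝ≥0∞))⁻¹)
    (x' : Fin n → Ω → EuclideanSpace ℝ (Fin d))
    (hx' : ∀ i ω, x' i ω = z i + sparseProj (S ω) ((n : ℝ)⁻¹ • ∑ j, y j - y i)) :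
    ∫ ω, ∑ i, ‖x' i ω - (n : ℝ)⁻¹ • ∑ j, x' j ω‖ ^ 2 ∂μ
      = q * ∑ i, ‖z i - (n : ℝ)⁻¹ • ∑ j, z j‖ ^ 2
        + p * ∑ i, ‖v i - (n : ℝ)⁻¹ • ∑ j, v j‖ ^ 2 := by
  classical
  have hn0 : (n : ℝ) ≠ 0 := Nat.cast_ne_zero.2 (by omega)
  set ybar : EuclideanSpace ℝ (Fin d) := (n : ℝ)⁻¹ • ∑ j, y j with hybar
  set zbar : EuclideanSpace ℝ (Fin d) := (n : ℝ)⁻¹ • ∑ j, z j with hzbar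
  set vbar : EuclideanSpace ℝ (Fin d) := (n : ℝ)⁻¹ • ∑ j, v j with hvbar
  set A : Fin d → ℝ := fun j => ∑ i, (z i j - zbar j)^2 with hA
  set B : Fin d → ℝ := fun j => ∑ i, (v i j - vbar j)^2 with hB
  set g : Finset (Fin d) → ℝ := fun s =>
    ∑ i, ‖(z i + sparseProj s (ybar - y i))
      - (n : ℝ)⁻¹ • ∑ j, (z j + sparseProj s (ybar - y j))‖ ^ 2 with hg
  have hsum_apply : ∀ {m : ℕ} (w : Fin m → EuclideanSpace ℝ (Fin d)) (j : Fin d),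
      (∑ k, w k) j = ∑ k, w k j := fun w j => by rw [WithLp.ofLp_sum, Finset.sum_apply]
  -- integrand rewriting
  have hint : (fun ω => ∑ i, ‖x' i ω - (n : ℝ)⁻¹ • ∑ j, x' j ω‖ ^ 2)
      = fun ω => g (S ω) := by
    funext ω
    simp_rw [hg, hx']
  -- key pointwise formula
  have hkey : ∀ s : Finset (Fin d), g s = ∑ j : Fin d, (if j ∈ s then B j else A j) := by
    intro s
    have hco : ∀ (i : Fin n) (j : Fin d),
        ((z i + sparseProj s (ybar - y i))
          - (n : ℝ)⁻¹ • ∑ k, (z k + sparseProj s (ybar - y k))) j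
        = if j ∈ s then v i j - vbar j else z i j - zbar j := by
      intro i j
      have hyb : ybar j = (n : ℝ)⁻¹ * ∑ k, y k j := by
        rw [hybar, PiLp.smul_apply, hsum_apply, smul_eq_mul]
      have hzb : zbar j = (n : ℝ)⁻¹ * ∑ k, z k j := by
        rw [hzbar, PiLp.smul_apply, hsum_apply, smul_eq_mul]
      have hvb : vbar j = (n : ℝ)⁻¹ * ∑ k, v k j := by
        rw [hvbar, PiLp.smul_apply, hsum_apply, smul_eq_mul]
      have hvj : ∀ i, v i j = z i j - y i j := fun i => by
        rw [hv i, PiLp.sub_apply]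
      rw [PiLp.sub_apply, PiLp.add_apply, PiLp.smul_apply, hsum_apply, smul_eq_mul]
      simp_rw [PiLp.add_apply, sparseProj_apply, PiLp.sub_apply]
      by_cases hjs : j ∈ s
      · simp only [hjs, if_true]
        rw [Finset.sum_add_distrib, Finset.sum_sub_distrib, Finset.sum_const,
          Finset.card_univ, Fintype.card_fin, nsmul_eq_mul]
        rw [hvb]
        simp_rw [hvj]
        rw [Finset.sum_sub_distrib, hyb]
        field_simp
        ring
      · simp only [hjs, if_false, add_zero]
        rw [hzb]
    rw [hg]
    simp_rw [euclid_norm_sq, hco]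
    rw [Finset.sum_comm]
    refine Finset.sum_congr rfl fun j _ => ?_
    by_cases hjs : j ∈ s <;> simp [hjs, hA, hB]
  -- the integral
  rw [hint, integral_comp_finset μ S hSmeas g]
  set P := Finset.powersetCard K (Finset.univ : Finset (Fin d)) with hP
  have hCpos : 0 < d.choose K := Nat.choose_pos hKd
  have hCne : ((d.choose K : ℝ)) ≠ 0 := by exact_mod_cast hCpos.ne'
  have hvanish : ∀ s ∈ (Finset.univ : Finset (Finset (Fin d))), s ∉ P →
      (μ (S ⁻¹' {s})).toReal * g s = 0 := by
    intro s _ hs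
    have : s.card ≠ K := fun h => hs (Finset.mem_powersetCard.2 ⟨Finset.subset_univ _, h⟩)
    rw [measure_zero_of_card_ne μ hKd S hSmeas hSunif s this]
    simp
  rw [← Finset.sum_subset (Finset.subset_univ P) hvanish]
  have hterm : ∀ s ∈ P, (μ (S ⁻¹' {s})).toReal * g s
      = (d.choose K : ℝ)⁻¹ * ∑ j : Fin d, (if j ∈ s then B j else A j) := by
    intro s hs
    rw [hSunif s (Finset.mem_powersetCard.1 hs).2, hkey s, ENNReal.toReal_inv]
    norm_num
  rw [Finset.sum_congr rfl hterm, ← Finset.mul_sum, Finset.sum_comm]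
  -- counting
  have hcount : ∀ j : Fin d, ∑ s ∈ P, (if j ∈ s then B j else A j)
      = ((d-1).choose (K-1) : ℝ) * B j
        + ((d.choose K : ℝ) - ((d-1).choose (K-1) : ℝ)) * A j := by
    intro j
    rw [Finset.sum_ite, Finset.sum_const, Finset.sum_const, nsmul_eq_mul, nsmul_eq_mul, hP,
      count_mem_powersetCard hK1 j]
    congr 1
    congr 1
    have hsplit := Finset.card_filter_add_card_filter_not
      (s := Finset.powersetCard K (Finset.univ : Finset (Fin d))) (p := fun s => j ∈ s)
    rw [count_mem_powersetCard hK1 j] at hsplit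
    rw [Finset.card_powersetCard, Finset.card_univ, Fintype.card_fin] at hsplit
    have : (Finset.filter (fun s => ¬ j ∈ s) (Finset.powersetCard K
        (Finset.univ : Finset (Fin d)))).card = d.choose K - (d-1).choose (K-1) := by omega
    rw [this, Nat.cast_sub (by omega)]
  simp_rw [hcount]
  -- arithmetic
  have hNC : (K : ℝ) * (d.choose K : ℝ) = (d : ℝ) * ((d-1).choose (K-1) : ℝ) := by
    have : K * d.choose K = d * (d-1).choose (K-1) := by
      obtain ⟨d', rfl⟩ : ∃ d', d = d' + 1 := ⟨d - 1, (Nat.succ_pred_eq_of_pos (by omega)).symm⟩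
      obtain ⟨K', rfl⟩ : ∃ K', K = K' + 1 := ⟨K - 1, (Nat.succ_pred_eq_of_pos hK1).symm⟩
      simp only [Nat.add_sub_cancel]
      rw [mul_comm, ← Nat.add_one_mul_choose_eq]
    exact_mod_cast this
  have hd0 : (d : ℝ) ≠ 0 := Nat.cast_ne_zero.2 (by omega)
  have hpv : ((d-1).choose (K-1) : ℝ) = p * (d.choose K : ℝ) := by
    rw [hp]; field_simp; linarith [hNC]
  -- right hand side expansion
  have hrhs : q * ∑ i, ‖z i - zbar‖ ^ 2 + p * ∑ i, ‖v i - vbar‖ ^ 2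
      = ∑ j : Fin d, (q * A j + p * B j) := by
    simp_rw [euclid_norm_sq, PiLp.sub_apply]
    rw [Finset.sum_add_distrib, ← Finset.mul_sum, ← Finset.mul_sum,
      Finset.sum_comm (γ := Fin n) (s := Finset.univ)]
    congr 1
    rw [Finset.sum_comm]
  rw [hrhs, Finset.mul_sum]
  refine Finset.sum_congr rfl fun j _ => ?_
  rw [hpv, hq]
  field_simp
  ring
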